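/- arXiv:2605.01576 — 3 statements merged into one kernel-verified Lean document; each statement's English description precedes it below -/
import Mathlib

section
/- Let ψ : ℝ → ℝ be a square-integrable real function and let g : ℝ → ℝ be differentiable, with all integrals below finite. Define A = ∫ ψ(p)²/p⁴ dp, B = 2∫ g'(p)·ψ(p)²/p² dp, and C = ∫ (ℏ²·ψ'(p)² + g'(p)²·ψ(p)²) dp, where ℏ > 0. If ψ is not identically zero and ψ' is not identically zero (in L²), then the discriminant satisfies B² < 4·A·C, so the quadratic τ ↦ A·τ² + B·τ + C is strictly positive for all real τ. -/
open MeasureTheory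

section

variable {α : Type*} [MeasurableSpace α] {μ : Measure α}

theorem sq_integral_mul_le_integral_sq_mul_integral_sq {f h : α → ℝ}
    (hf : Integrable (fun x => f x ^ 2) μ) (hh : Integrable (fun x => h x ^ 2) μ)
    (hfh : Integrable (fun x => f x * h x) μ) :
    (∫ x, f x * h x ∂μ) ^ 2 ≤ (∫ x, f x ^ 2 ∂μ) * ∫ x, h x ^ 2 ∂μ := by
  -- `t ↦ ∫ (t f + h)²` is a nonnegative quadratic, so its discriminant is nonpositive.
  have hquad : ∀ t : ℝ, 0 ≤ (∫ x, f x ^ 2 ∂μ) * (t * t) + (2 * ∫ x, f x * h x ∂μ) * t +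
      ∫ x, h x ^ 2 ∂μ := by
    intro t
    have hlin : Integrable (fun x => t * t * f x ^ 2 + 2 * t * (f x * h x)) μ :=
      (hf.const_mul _).add (hfh.const_mul _)
    calc 0 ≤ ∫ x, (t * f x + h x) ^ 2 ∂μ := integral_nonneg fun x => sq_nonneg _
      _ = ∫ x, t * t * f x ^ 2 + 2 * t * (f x * h x) + h x ^ 2 ∂μ := by
        congr 1 with x; ring
      _ = _ := by
        rw [integral_add hlin hh, integral_add (hf.const_mul _) (hfh.const_mul _),
          integral_const_mul, integral_const_mul]
        ring
  have hdisc := discrim_le_zero hquad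
  rw [discrim] at hdisc
  linarith

theorem integral_sq_pos {f : α → ℝ} (hf : Integrable (fun x => f x ^ 2) μ)
    (hne : ¬ ∀ᵐ x ∂μ, f x = 0) : 0 < ∫ x, f x ^ 2 ∂μ := by
  refine (integral_nonneg fun x => sq_nonneg (f x)).lt_of_ne fun hzero => hne ?_
  filter_upwards [(integral_eq_zero_iff_of_nonneg (fun x => sq_nonneg (f x)) hf).mp
    hzero.symm] with x hx
  exact pow_eq_zero_iff two_ne_zero |>.mp hx

end

theorem ae_div_pow_eq_zero_iff (μ : Measure ℝ) [NullSingletonClass μ] (f : ℝ → ℝ) (n : ℕ) :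
    (∀ᵐ x ∂μ, f x / x ^ n = 0) ↔ ∀ᵐ x ∂μ, f x = 0 :=
  Filter.eventually_congr <| (μ.ae_ne 0).mono fun x hx => by simp [hx]

theorem quadratic_pos_of_sq_lt {K : Type*} [Field K] [LinearOrder K] [IsStrictOrderedRing K]
    {a b c : K} (ha : 0 < a) (hdisc : b ^ 2 < 4 * a * c) (x : K) :
    0 < a * x ^ 2 + b * x + c := by
  have hsq : 4 * a * (a * x ^ 2 + b * x + c) = (2 * a * x + b) ^ 2 + (4 * a * c - b ^ 2) := by
    ring
  have : 0 < 4 * a * (a * x ^ 2 + b * x + c) := hsq ▸ by positivity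
  exact pos_of_mul_pos_right this (by positivity)

theorem area_quadratic_pos_general
    (ψ g : ℝ → ℝ) (ℏ : ℝ) (hℏ : 0 < ℏ)
    (hψ'L2 : Integrable (fun p => (deriv ψ p) ^ 2))
    (hA : Integrable (fun p => ψ p ^ 2 / p ^ 4))
    (hB : Integrable (fun p => deriv g p * ψ p ^ 2 / p ^ 2))
    (hgψL2 : Integrable (fun p => (deriv g p * ψ p) ^ 2))
    (hψne : ¬ (∀ᵐ p : ℝ ∂volume, ψ p = 0))
    (hψ'ne : ¬ (∀ᵐ p : ℝ ∂volume, deriv ψ p = 0)) :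
    (∫ p : ℝ, 2 * (deriv g p * ψ p ^ 2 / p ^ 2)) ^ 2 <
      4 * (∫ p : ℝ, ψ p ^ 2 / p ^ 4) *
        (∫ p : ℝ, ℏ ^ 2 * (deriv ψ p) ^ 2 + (deriv g p) ^ 2 * ψ p ^ 2) ∧
    ∀ τ : ℝ,
      0 < (∫ p : ℝ, ψ p ^ 2 / p ^ 4) * τ ^ 2 +
          (∫ p : ℝ, 2 * (deriv g p * ψ p ^ 2 / p ^ 2)) * τ +
          (∫ p : ℝ, ℏ ^ 2 * (deriv ψ p) ^ 2 + (deriv g p) ^ 2 * ψ p ^ 2) := by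
  have hsqA : (fun p : ℝ => (ψ p / p ^ 2) ^ 2) = fun p => ψ p ^ 2 / p ^ 4 := by
    ext p; ring
  have hmulB : (fun p : ℝ => ψ p / p ^ 2 * (deriv g p * ψ p)) =
      fun p => deriv g p * ψ p ^ 2 / p ^ 2 := by
    ext p; ring
  have hCS := sq_integral_mul_le_integral_sq_mul_integral_sq (hsqA ▸ hA) hgψL2 (hmulB ▸ hB)
  rw [hsqA, hmulB] at hCS
  have hApos : 0 < ∫ p : ℝ, ψ p ^ 2 / p ^ 4 :=
    hsqA ▸ integral_sq_pos (hsqA ▸ hA) (by rwa [ae_div_pow_eq_zero_iff])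
  have hDpos : 0 < ∫ p : ℝ, deriv ψ p ^ 2 := integral_sq_pos hψ'L2 hψ'ne
  have hBeq : ∫ p : ℝ, 2 * (deriv g p * ψ p ^ 2 / p ^ 2) =
      2 * ∫ p : ℝ, deriv g p * ψ p ^ 2 / p ^ 2 := integral_const_mul _ _
  have hCeq : ∫ p : ℝ, ℏ ^ 2 * deriv ψ p ^ 2 + deriv g p ^ 2 * ψ p ^ 2 =
      ℏ ^ 2 * (∫ p : ℝ, deriv ψ p ^ 2) + ∫ p : ℝ, (deriv g p * ψ p) ^ 2 := by
    rw [← integral_const_mul, ← integral_add (hψ'L2.const_mul _) hgψL2]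
    congr 1 with p
    ring
  -- Cauchy–Schwarz gives `B² ≤ 4 A ∫ (g'ψ)²`; the term `ℏ² ∫ ψ'² > 0` makes it strict.
  have hdisc : (∫ p : ℝ, 2 * (deriv g p * ψ p ^ 2 / p ^ 2)) ^ 2 <
      4 * (∫ p : ℝ, ψ p ^ 2 / p ^ 4) *
        (∫ p : ℝ, ℏ ^ 2 * deriv ψ p ^ 2 + deriv g p ^ 2 * ψ p ^ 2) := by
    rw [hBeq, hCeq]
    nlinarith [mul_pos hApos (mul_pos (pow_pos hℏ 2) hDpos)]
  exact ⟨hdisc, quadratic_pos_of_sq_lt hApos hdisc⟩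

/-- Strict positivity of the gauge-invariant area expectation value:
the discriminant of the quadratic in relational time is strictly negative. -/
theorem area_quadratic_pos
    (ψ g : ℝ → ℝ) (ℏ : ℝ) (hℏ : 0 < ℏ)
    (hψdiff : Differentiable ℝ ψ) (hgdiff : Differentiable ℝ g)
    (hψL2 : Integrable (fun p => ψ p ^ 2))
    (hψ'L2 : Integrable (fun p => (deriv ψ p) ^ 2))
    (hA : Integrable (fun p => ψ p ^ 2 / p ^ 4))
    (hB : Integrable (fun p => deriv g p * ψ p ^ 2 / p ^ 2))
    (hC : Integrable (fun p => ℏ ^ 2 * (deriv ψ p) ^ 2 + (deriv g p) ^ 2 * ψ p ^ 2))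
    (hgψL2 : Integrable (fun p => (deriv g p * ψ p) ^ 2))
    (hψne : ¬ (∀ᵐ p : ℝ ∂volume, ψ p = 0))
    (hψ'ne : ¬ (∀ᵐ p : ℝ ∂volume, deriv ψ p = 0)) :
    (∫ p : ℝ, 2 * (deriv g p * ψ p ^ 2 / p ^ 2)) ^ 2 <
      4 * (∫ p : ℝ, ψ p ^ 2 / p ^ 4) *
        (∫ p : ℝ, ℏ ^ 2 * (deriv ψ p) ^ 2 + (deriv g p) ^ 2 * ψ p ^ 2) ∧
    ∀ τ : ℝ,
      0 < (∫ p : ℝ, ψ p ^ 2 / p ^ 4) * τ ^ 2 +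
          (∫ p : ℝ, 2 * (deriv g p * ψ p ^ 2 / p ^ 2)) * τ +
          (∫ p : ℝ, ℏ ^ 2 * (deriv ψ p) ^ 2 + (deriv g p) ^ 2 * ψ p ^ 2) :=
  area_quadratic_pos_general ψ g ℏ hℏ hψ'L2 hA hB hgψL2 hψne hψ'ne
end

section
/- Let n ≥ 1 be an integer, σ > 0, and let ψₙ be the normalized state ψₙ(p) = N·pⁿ·exp(−p²/(2σ²)) for p < 0 (zero for p ≥ 0) with N² = 2/(σ^(2n+1)·Γ(n+1/2)). Then ∫_ℝ (ψₙ'(p))² dp = (1/σ²)·(4n−1)/(4n−2). -/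
open MeasureTheory Real Set

/-!
For `p < 0` one has `ψ' p = N (n pⁿ⁻¹ - pⁿ⁺¹ / σ²) exp (-p² / (2σ²))`, and `ψ' = 0` for
`p > 0`; the single point `0` does not matter. Squaring and reflecting `p ↦ -p` turns
`∫ (ψ')²` into a combination of the half-line Gaussian moments
`Mₖ = ∫₀^∞ x²ᵏ exp (-x² / σ²) dx = σ²ᵏ⁺¹ Γ(k + ½) / 2`, which satisfy `Mₖ₊₁ = σ² (k + ½) Mₖ`,
while the normalisation says exactly `N² Mₙ = 1`.
-/

noncomputable def halfGaussianMoment (σ : ℝ) (k : ℕ) : ℝ :=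
  ∫ x in Ioi 0, x ^ (2 * k) * exp (-x ^ 2 / σ ^ 2)

lemma integrableOn_Ioi_pow_mul_exp_neg_sq_div_sq {σ : ℝ} (hσ : σ ≠ 0) (m : ℕ) :
    IntegrableOn (fun x : ℝ => x ^ m * exp (-x ^ 2 / σ ^ 2)) (Ioi 0) := by
  refine (integrableOn_rpow_mul_exp_neg_mul_sq (b := 1 / σ ^ 2) (by positivity)
    (s := m) (by linarith [m.cast_nonneg (α := ℝ)])).congr_fun (fun x _ => ?_) measurableSet_Ioi
  simp only [rpow_natCast]
  congr 2
  ring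

lemma halfGaussianMoment_eq {σ : ℝ} (hσ : 0 < σ) (k : ℕ) :
    halfGaussianMoment σ k = σ ^ (2 * k + 1) / 2 * Gamma (k + 1 / 2) := by
  have h := integral_rpow_mul_exp_neg_mul_rpow (p := 2) (q := (2 * k : ℕ)) (b := 1 / σ ^ 2)
    two_pos (by linarith [(2 * k).cast_nonneg (α := ℝ)]) (by positivity)
  have hexponent (x : ℝ) : -(1 / σ ^ 2) * x ^ 2 = -x ^ 2 / σ ^ 2 := by ring
  simp only [rpow_two, rpow_natCast, hexponent] at h
  rw [halfGaussianMoment, h, one_div, inv_rpow (by positivity), ← rpow_neg (by positivity),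
    ← rpow_natCast σ 2, ← rpow_mul hσ.le, ← rpow_natCast σ (2 * k + 1)]
  push_cast
  ring_nf

lemma halfGaussianMoment_succ {σ : ℝ} (hσ : 0 < σ) (k : ℕ) :
    halfGaussianMoment σ (k + 1) = σ ^ 2 * (k + 1 / 2) * halfGaussianMoment σ k := by
  rw [halfGaussianMoment_eq hσ, halfGaussianMoment_eq hσ, Nat.cast_succ, add_right_comm,
    Gamma_add_one (by positivity)]
  ring

lemma halfGaussianMoment_pos {σ : ℝ} (hσ : 0 < σ) (k : ℕ) : 0 < halfGaussianMoment σ k := by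
  rw [halfGaussianMoment_eq hσ]
  have := Gamma_pos_of_pos (show (0 : ℝ) < k + 1 / 2 by positivity)
  positivity

lemma integral_sq_deriv_ite_neg (f : ℝ → ℝ) :
    ∫ p, deriv (fun p => if p < 0 then f p else 0) p ^ 2 = ∫ p in Iio 0, deriv f p ^ 2 := by
  rw [← integral_indicator measurableSet_Iio]
  refine integral_congr_ae ?_
  filter_upwards [compl_mem_ae_iff.mpr (measure_singleton (0 : ℝ))] with p hp
  rcases (Ne.lt_or_gt hp : p < 0 ∨ 0 < p) with hp | hp
  · rw [indicator_of_mem (show p ∈ Iio 0 from hp)]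
    congr 1
    exact Filter.EventuallyEq.deriv_eq
      (Filter.eventually_of_mem (Iio_mem_nhds hp) fun q hq => if_pos hq)
  · rw [indicator_of_notMem (show p ∉ Iio 0 from not_lt.mpr hp.le),
      Filter.EventuallyEq.deriv_eq (f := fun _ => (0 : ℝ))
        (Filter.eventually_of_mem (Ioi_mem_nhds hp) fun q hq => if_neg (not_lt.mpr (le_of_lt hq)))]
    simp

lemma integral_Iio_eq_integral_Ioi_of_even {f : ℝ → ℝ} (hf : ∀ x, f (-x) = f x) :
    ∫ x in Iio 0, f x = ∫ x in Ioi 0, f x := by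
  rw [← integral_Iic_eq_integral_Iio, ← neg_zero, ← integral_comp_neg_Ioi, neg_zero]
  simp only [hf]

lemma hasDerivAt_mul_pow_succ_mul_exp (N σ : ℝ) (a : ℕ) (p : ℝ) :
    HasDerivAt (fun p => N * p ^ (a + 1) * exp (-p ^ 2 / (2 * σ ^ 2)))
      (N * ((a + 1) * p ^ a - p ^ (a + 2) / σ ^ 2) * exp (-p ^ 2 / (2 * σ ^ 2))) p := by
  have hexp : HasDerivAt (fun p => exp (-p ^ 2 / (2 * σ ^ 2)))
      (exp (-p ^ 2 / (2 * σ ^ 2)) * (-(2 * p) / (2 * σ ^ 2))) p := by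
    simpa using ((hasDerivAt_pow 2 p).neg.div_const (2 * σ ^ 2)).exp
  refine (((hasDerivAt_pow (a + 1) p).const_mul N).mul hexp).congr_deriv ?_
  rw [Nat.add_sub_cancel]
  push_cast
  ring

lemma integral_Ioi_three_moments {σ : ℝ} (hσ : σ ≠ 0) (a : ℕ) (c₀ c₁ c₂ : ℝ) :
    ∫ x in Ioi 0, (c₀ * x ^ (2 * a) - c₁ * x ^ (2 * (a + 1)) + c₂ * x ^ (2 * (a + 2))) *
      exp (-x ^ 2 / σ ^ 2) =
      c₀ * halfGaussianMoment σ a - c₁ * halfGaussianMoment σ (a + 1) +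
        c₂ * halfGaussianMoment σ (a + 2) := by
  have hmoment (k : ℕ) (c : ℝ) : IntegrableOn (fun x => c * (x ^ (2 * k) * exp (-x ^ 2 / σ ^ 2)))
      (Ioi 0) := (integrableOn_Ioi_pow_mul_exp_neg_sq_div_sq hσ _).const_mul c
  simp only [add_mul, sub_mul, mul_assoc]
  rw [integral_add ?_ (hmoment _ _), integral_sub (hmoment _ _) (hmoment _ _)]
  · simp only [integral_const_mul, halfGaussianMoment]
  · exact (hmoment _ _).sub (hmoment _ _)

lemma sq_deriv_mul_pow_succ_mul_exp (N σ : ℝ) (a : ℕ) (p : ℝ) :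
    deriv (fun p => N * p ^ (a + 1) * exp (-p ^ 2 / (2 * σ ^ 2))) p ^ 2 =
      N ^ 2 * (((a + 1) ^ 2 * p ^ (2 * a) - 2 * (a + 1) / σ ^ 2 * p ^ (2 * (a + 1)) +
        1 / σ ^ 4 * p ^ (2 * (a + 2))) * exp (-p ^ 2 / σ ^ 2)) := by
  have hexp : exp (-p ^ 2 / (2 * σ ^ 2)) ^ 2 = exp (-p ^ 2 / σ ^ 2) := by
    rw [sq, ← exp_add]
    ring_nf
  rw [(hasDerivAt_mul_pow_succ_mul_exp N σ a p).deriv, ← hexp]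
  ring

/-- The minimum-area integral for normalized Gaussian physical states:
`∫ (ψₙ')² dp = (1/σ²)·(4n−1)/(4n−2)`. -/
theorem gaussian_state_deriv_integral (n : ℕ) (hn : 1 ≤ n) (σ : ℝ) (hσ : 0 < σ) :
    let N : ℝ := Real.sqrt (2 / (σ ^ (2 * n + 1) * Real.Gamma ((n : ℝ) + 1 / 2)))
    let ψ : ℝ → ℝ := fun p =>
      if p < 0 then N * p ^ n * Real.exp (-p ^ 2 / (2 * σ ^ 2)) else 0
    ∫ p : ℝ, (deriv ψ p) ^ 2 = (1 / σ ^ 2) * ((4 * (n : ℝ) - 1) / (4 * (n : ℝ) - 2)) := by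
  intro N ψ
  obtain ⟨a, rfl⟩ : ∃ a, n = a + 1 := ⟨n - 1, by omega⟩
  have hN : N ^ 2 = (halfGaussianMoment σ (a + 1))⁻¹ := by
    have hΓ := Gamma_pos_of_pos (show (0 : ℝ) < (a + 1 : ℕ) + 1 / 2 by positivity)
    rw [sq_sqrt (by positivity), halfGaussianMoment_eq hσ, div_mul_eq_mul_div, inv_div]
  rw [integral_sq_deriv_ite_neg, funext (sq_deriv_mul_pow_succ_mul_exp N σ a),
    integral_Iio_eq_integral_Ioi_of_even (fun x => by simp only [pow_mul, neg_sq]),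
    integral_const_mul, integral_Ioi_three_moments hσ.ne', halfGaussianMoment_succ hσ (a + 1), hN]
  have hMpos := halfGaussianMoment_pos hσ a
  rw [halfGaussianMoment_succ hσ a]
  push_cast
  rw [show 4 * ((a : ℝ) + 1) - 2 = 2 * (2 * a + 1) by ring]
  field_simp
  ring
end

section
/- On the domain D₀ of smooth functions φ : ℝ → ℂ that, together with all derivatives, decay faster than any power of |p| at infinity and faster than any power of |p|⁻¹ at p = 0, define Â = iℏ d/dp, Q̂ = multiplication by 1/p, and for a real constant α and real parameter τ define the operator F(τ) = Â + α²·(B̂ − τ)·Q̂² where B̂ commutes appropriately. In the simplified case B̂ = 0 (clock reading τ), the second-order Hadamard expansion terminates: denoting [X, Y]₍₀₎ = X, [X,Y]₍ₖ₎ = [[X,Y]₍ₖ₋₁₎, Y], one has [Â², α²Q̂]₍₁₎ = −iℏα²(Â Q̂² + Q̂² Â), [Â², α²Q̂]₍₂₎ = −2ℏ²α⁴ Q̂⁴, and [Â², α²Q̂]₍ₖ₎ = 0 for all k ≥ 3. -/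
/-- Nested (Hadamard) commutators: `c 0 = X`, `c (k+1) = [c k, Y]`. -/
def nestedComm {M : Type*} [AddCommGroup M] [Module ℂ M]
    (X Y : Module.End ℂ M) : ℕ → Module.End ℂ M
  | 0 => X
  | (k + 1) => nestedComm X Y k * Y - Y * nestedComm X Y k

/-!
Since `[Â, Q̂] = c Q̂²` with `c = -iℏ` a scalar, the Leibniz rule gives
`[Â², Q̂] = c (Â Q̂² + Q̂² Â)` and then `[Â Q̂² + Q̂² Â, Q̂] = 2c Q̂⁴`, which commutes with `Q̂`.
Scaling `Q̂` by `α²` only multiplies the `k`-th nested commutator by `α^(2k)`.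
-/

section Commutator

variable {S R : Type*} [CommSemiring S] [Ring R] [Algebra S R]

theorem commutator_mul_self_of_commutator_eq_smul_sq {A Q : R} {c : S}
    (hAQ : A * Q - Q * A = c • (Q * Q)) :
    A * A * Q - Q * (A * A) = c • (A * (Q * Q) + Q * Q * A) := by
  calc A * A * Q - Q * (A * A) = A * (A * Q - Q * A) + (A * Q - Q * A) * A := by noncomm_ring
    _ = c • (A * (Q * Q) + Q * Q * A) := by
      rw [hAQ, mul_smul_comm, smul_mul_assoc, smul_add]

theorem commutator_anticomm_sq_of_commutator_eq_smul_sq {A Q : R} {c : S}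
    (hAQ : A * Q - Q * A = c • (Q * Q)) :
    (A * (Q * Q) + Q * Q * A) * Q - Q * (A * (Q * Q) + Q * Q * A) =
      (2 * c) • (Q * Q * Q * Q) := by
  calc (A * (Q * Q) + Q * Q * A) * Q - Q * (A * (Q * Q) + Q * Q * A)
        = (A * Q - Q * A) * (Q * Q) + Q * Q * (A * Q - Q * A) := by noncomm_ring
    _ = (2 * c) • (Q * Q * Q * Q) := by
      rw [hAQ, smul_mul_assoc, mul_smul_comm, mul_smul, two_smul]
      simp only [mul_assoc]

end Commutator

section NestedComm

variable {M : Type*} [AddCommGroup M] [Module ℂ M]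

@[simp]
theorem nestedComm_zero (X Y : Module.End ℂ M) : nestedComm X Y 0 = X := rfl

theorem nestedComm_succ (X Y : Module.End ℂ M) (k : ℕ) :
    nestedComm X Y (k + 1) = nestedComm X Y k * Y - Y * nestedComm X Y k := rfl

theorem nestedComm_smul_right (X Y : Module.End ℂ M) (a : ℂ) (k : ℕ) :
    nestedComm X (a • Y) k = a ^ k • nestedComm X Y k := by
  induction k with
  | zero => simp
  | succ k ih =>
    rw [nestedComm_succ, nestedComm_succ, ih, smul_mul_smul_comm, smul_mul_smul_comm, mul_comm a,
      ← smul_sub, pow_succ]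

theorem nestedComm_eq_zero_of_le {X Y : Module.End ℂ M} {n k : ℕ}
    (hn : nestedComm X Y n = 0) (hk : n ≤ k) : nestedComm X Y k = 0 := by
  induction k, hk using Nat.le_induction with
  | base => exact hn
  | succ k _ ih => rw [nestedComm_succ, ih, zero_mul, mul_zero, sub_zero]

variable {A Q : Module.End ℂ M} {c : ℂ}

theorem nestedComm_mul_self_one (hAQ : A * Q - Q * A = c • (Q * Q)) :
    nestedComm (A * A) Q 1 = c • (A * (Q * Q) + Q * Q * A) :=
  commutator_mul_self_of_commutator_eq_smul_sq hAQ

theorem nestedComm_mul_self_two (hAQ : A * Q - Q * A = c • (Q * Q)) :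
    nestedComm (A * A) Q 2 = (2 * c ^ 2) • (Q * Q * Q * Q) := by
  rw [nestedComm_succ, nestedComm_mul_self_one hAQ, smul_mul_assoc, mul_smul_comm, ← smul_sub,
    commutator_anticomm_sq_of_commutator_eq_smul_sq hAQ, smul_smul]
  ring_nf

theorem nestedComm_mul_self_three (hAQ : A * Q - Q * A = c • (Q * Q)) :
    nestedComm (A * A) Q 3 = 0 := by
  rw [nestedComm_succ, nestedComm_mul_self_two hAQ, smul_mul_assoc, mul_smul_comm, ← smul_sub]
  simp only [mul_assoc, sub_self, smul_zero]

end NestedComm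

/-- The Hadamard expansion of the area operator `Â²` with respect to the system
Hamiltonian `α²Q̂` (multiplication by `α²/p`) terminates at second order,
given `[Â, Q̂] = −iℏ Q̂²`. -/
theorem area_hadamard_terminates
    {M : Type*} [AddCommGroup M] [Module ℂ M]
    (ℏ α : ℝ) (A Q : Module.End ℂ M)
    (hAQ : A * Q - Q * A = (-(Complex.I * (ℏ : ℂ))) • (Q * Q)) :
    nestedComm (A * A) (((α : ℂ) ^ 2) • Q) 1 =
        (-(Complex.I * (ℏ : ℂ) * (α : ℂ) ^ 2)) • (A * (Q * Q) + (Q * Q) * A) ∧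
    nestedComm (A * A) (((α : ℂ) ^ 2) • Q) 2 =
        (-(2 * (ℏ : ℂ) ^ 2 * (α : ℂ) ^ 4)) • (Q * Q * Q * Q) ∧
    ∀ k : ℕ, 3 ≤ k → nestedComm (A * A) (((α : ℂ) ^ 2) • Q) k = 0 := by
  refine ⟨?_, ?_, fun k hk => nestedComm_eq_zero_of_le ?_ hk⟩
  · rw [nestedComm_smul_right, nestedComm_mul_self_one hAQ, smul_smul]
    ring_nf
  · rw [nestedComm_smul_right, nestedComm_mul_self_two hAQ, smul_smul]
    ring_nf
    rw [Complex.I_sq]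
    ring_nf
  · rw [nestedComm_smul_right, nestedComm_mul_self_three hAQ, smul_zero]
end
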